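/- arXiv:1909.11533 — 5 statements merged into one kernel-verified Lean document; each statement's English description precedes it below -/
import Mathlib

section
/- The soliton has zero NLS energy on the real line: (1/2)·∫_ℝ φ'(x)² dx = (1/6)·∫_ℝ φ(x)⁶ dx. -/
open Real MeasureTheory Set Filter

/-- The soliton `φ(x) = cosh(2x/√3)^(-1/2)`. -/
noncomputable def soliton (x : ℝ) : ℝ := (Real.cosh (2 * x / Real.sqrt 3)) ^ (-(1/2) : ℝ)

/-!
The soliton satisfies `φ' = -(tanh (2x/√3) / √3) φ`, and `tanh² (2x/√3) + φ⁴ = 1`. This gives the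
first integral `3 φ'² = φ² - φ⁶` and the stationary equation `φ'' = φ/3 - φ⁵`, hence
`(φ φ')' = φ'² + φ φ'' = 4 (φ'²/2 - φ⁶/6)`. Everything is dominated by the integrable function
`φ² = sech (2x/√3)`, so `φ φ'` and its derivative are integrable and the integral of `(φ φ')'`
over `ℝ` vanishes.
-/

theorem Real.hasDerivAt_tanh (y : ℝ) : HasDerivAt tanh (1 - tanh y ^ 2) y := by
  have hc := (cosh_pos y).ne'
  rw [show tanh = sinh / cosh from funext tanh_eq_sinh_div_cosh]
  refine ((hasDerivAt_sinh y).div (hasDerivAt_cosh y) hc).congr_deriv ?_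
  rw [Pi.div_apply]
  field_simp

theorem integrable_inv_cosh : Integrable fun x : ℝ => (cosh x)⁻¹ := by
  have hcont : Continuous fun x : ℝ => (cosh x)⁻¹ :=
    continuous_cosh.inv₀ fun x => (cosh_pos x).ne'
  refine hcont.locallyIntegrable.integrable_of_isBigO_atTop_of_norm_isNegInvariant
    (g := fun x => exp (-x)) (Eventually.of_forall fun x => by simp [cosh_neg]) ?_
    ⟨Ioi 0, Ioi_mem_atTop 0, by simpa using exp_neg_integrableOn_Ioi 0 one_pos⟩
  refine Asymptotics.IsBigO.of_bound 2 (Eventually.of_forall fun x => ?_)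
  have hexp : exp x / 2 ≤ cosh x := by rw [cosh_eq]; linarith [exp_pos (-x)]
  rw [norm_inv, norm_of_nonneg (cosh_pos x).le, norm_of_nonneg (exp_pos _).le, exp_neg,
    ← div_eq_mul_inv]
  calc (cosh x)⁻¹ ≤ (exp x / 2)⁻¹ := inv_anti₀ (by positivity) hexp
    _ = 2 / exp x := inv_div _ _

lemma hasDerivAt_two_mul_div_sqrt_three (x : ℝ) :
    HasDerivAt (fun y : ℝ => 2 * y / √3) (2 / √3) x := by
  simpa using ((hasDerivAt_id x).const_mul 2).div_const √3

lemma soliton_sq (x : ℝ) : soliton x ^ 2 = (cosh (2 * x / √3))⁻¹ := by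
  rw [soliton, ← rpow_natCast, ← rpow_mul (cosh_pos _).le]
  norm_num [rpow_neg_one]

lemma tanh_sq_add_soliton_pow_four (x : ℝ) : tanh (2 * x / √3) ^ 2 + soliton x ^ 4 = 1 := by
  rw [show soliton x ^ 4 = (soliton x ^ 2) ^ 2 by ring, soliton_sq, tanh_eq_sinh_div_cosh]
  have hc := (cosh_pos (2 * x / √3)).ne'
  field_simp
  linarith [cosh_sq (2 * x / √3)]

lemma hasDerivAt_soliton (x : ℝ) :
    HasDerivAt soliton (-(tanh (2 * x / √3) / √3) * soliton x) x := by
  have hc := cosh_pos (2 * x / √3)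
  have h : HasDerivAt soliton _ x :=
    ((hasDerivAt_cosh _).comp x (hasDerivAt_two_mul_div_sqrt_three x)).rpow_const
      (p := -(1/2)) (Or.inl hc.ne')
  refine h.congr_deriv ?_
  rw [soliton, Function.comp_apply, rpow_sub_one hc.ne', tanh_eq_sinh_div_cosh]
  field_simp

lemma deriv_soliton : deriv soliton = fun x => -(tanh (2 * x / √3) / √3) * soliton x :=
  funext fun x => (hasDerivAt_soliton x).deriv

lemma deriv_soliton_sq (x : ℝ) : deriv soliton x ^ 2 = (soliton x ^ 2 - soliton x ^ 6) / 3 := by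
  rw [deriv_soliton, mul_pow, neg_sq, div_pow, sq_sqrt (by norm_num)]
  linear_combination (soliton x ^ 2 / 3) * tanh_sq_add_soliton_pow_four x

lemma hasDerivAt_deriv_soliton (x : ℝ) :
    HasDerivAt (deriv soliton) (soliton x / 3 - soliton x ^ 5) x := by
  have ht := ((hasDerivAt_tanh _).comp x (hasDerivAt_two_mul_div_sqrt_three x)).div_const √3
  rw [deriv_soliton]
  refine (ht.neg.mul (hasDerivAt_soliton x)).congr_deriv ?_
  simp only [Pi.neg_apply, Function.comp_apply]
  field_simp
  rw [sq_sqrt (by norm_num)]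
  linear_combination 9 * soliton x * tanh_sq_add_soliton_pow_four x

lemma hasDerivAt_soliton_mul_deriv (x : ℝ) :
    HasDerivAt (fun y => soliton y * deriv soliton y)
      (4 * ((1/2) * deriv soliton x ^ 2 - (1/6) * soliton x ^ 6)) x := by
  refine ((hasDerivAt_soliton x).mul (hasDerivAt_deriv_soliton x)).congr_deriv ?_
  rw [← (hasDerivAt_soliton x).deriv]
  linear_combination (-1) * deriv_soliton_sq x

lemma continuous_soliton : Continuous soliton :=
  continuous_iff_continuousAt.2 fun x => (hasDerivAt_soliton x).continuousAt

lemma continuous_deriv_soliton : Continuous (deriv soliton) :=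
  continuous_iff_continuousAt.2 fun x => (hasDerivAt_deriv_soliton x).continuousAt

lemma integrable_soliton_sq : Integrable fun x => soliton x ^ 2 := by
  simp_rw [soliton_sq, mul_div_right_comm (2 : ℝ)]
  exact integrable_inv_cosh.comp_mul_left' (by positivity)

lemma integrable_soliton_pow_six : Integrable fun x => soliton x ^ 6 := by
  refine integrable_soliton_sq.mono (continuous_soliton.pow 6).aestronglyMeasurable
    (Eventually.of_forall fun x => ?_)
  have h4 : soliton x ^ 4 ≤ 1 := by
    linarith [tanh_sq_add_soliton_pow_four x, sq_nonneg (tanh (2 * x / √3))]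
  rw [norm_of_nonneg (by positivity), norm_of_nonneg (sq_nonneg _)]
  nlinarith [sq_nonneg (soliton x)]

lemma integrable_deriv_soliton_sq : Integrable fun x => deriv soliton x ^ 2 := by
  simp_rw [deriv_soliton_sq]
  exact (integrable_soliton_sq.sub integrable_soliton_pow_six).div_const 3

lemma integrable_soliton_mul_deriv : Integrable fun x => soliton x * deriv soliton x := by
  refine integrable_soliton_sq.mono
    (continuous_soliton.mul continuous_deriv_soliton).aestronglyMeasurable
    (Eventually.of_forall fun x => ?_)
  rw [norm_of_nonneg (sq_nonneg _), norm_eq_abs]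
  refine abs_le_of_sq_le_sq ?_ (sq_nonneg _)
  rw [mul_pow, deriv_soliton_sq]
  nlinarith [sq_nonneg (soliton x ^ 2), sq_nonneg (soliton x ^ 4)]

theorem stmt_3 :
    (1/2) * ∫ x : ℝ, (deriv soliton x) ^ 2
      = (1/6) * ∫ x : ℝ, (soliton x) ^ 6 := by
  have hA := integrable_deriv_soliton_sq.const_mul (1/2)
  have hB := integrable_soliton_pow_six.const_mul (1/6)
  have h := integral_eq_zero_of_hasDerivAt_of_integrable hasDerivAt_soliton_mul_deriv
    ((hA.sub hB).const_mul 4) integrable_soliton_mul_deriv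
  rw [integral_const_mul, integral_sub hA hB, integral_const_mul, integral_const_mul] at h
  linarith
end

section
/- Existence of stationary solutions on the pendant with Kirchhoff conditions: for every z > 0 there exist Λ > 0 and a function v : ℝ → ℝ, twice continuously differentiable on [0,1], with v(x) > 0 for all x ∈ [0,1], satisfying v''(x) + v(x)^5 = (Λ²/3)·v(x) for all x ∈ [0,1], together with the boundary conditions v(0) = φ_Λ(z/Λ), v'(0) = (2/√3)·φ_Λ(z/Λ)·(Λ² − φ_Λ(z/Λ)⁴)^(1/2) (equal to 2·|φ_Λ'(z/Λ)|, the Kirchhoff condition matching two translated solitons glued on the line), and v'(1) = 0 (the Kirchhoff condition at the terminal point of the pendant). -/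
open Real MeasureTheory Set Filter

/-- The rescaled soliton `φ_Λ(x) = √Λ · φ(Λ x)`. -/
noncomputable def solitonL (Λ x : ℝ) : ℝ := Real.sqrt Λ * soliton (Λ * x)

/-!
Rescaling `v x = √Λ * w (Λ * (x - 1))` turns the problem into `w'' = w / 3 - w ^ 5` on `[-Λ, 0]`
with `w' 0 = 0`, `w (-Λ) = p := φ z` and the prescribed slope at `-Λ`. Along such a trajectory
`3 w'² = w² - w⁶ + (b⁶ - b²)`, where `b = w 0` is the turning point, so the prescribed slope is
reached at height `p` exactly when `b⁶ - b² = 3 (p² - p⁶)`; this fixes `b > 1`, and `Λ` is the time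
the trajectory needs to climb from `p` to `b`. Writing `w = b - s²` removes the square-root
singularity at the turning point: `s` solves an autonomous first-order equation with positive
smooth right-hand side, obtained globally by inverting `σ ↦ ∫₀^σ 1 / speed`.
-/

open Topology

theorem exists_hasDerivAt_comp_of_pos_of_le {g : ℝ → ℝ} {M : ℝ} (hg : Continuous g)
    (hpos : ∀ s, 0 < g s) (hM : ∀ s, g s ≤ M) :
    ∃ S : ℝ → ℝ, (∀ σ, S (∫ s in (0)..σ, (g s)⁻¹) = σ) ∧ ∀ t, HasDerivAt S (g (S t)) t := by
  set T : ℝ → ℝ := fun σ => ∫ s in (0)..σ, (g s)⁻¹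
  have hT : ∀ σ, HasDerivAt T (g σ)⁻¹ σ := fun σ =>
    ((hg.inv₀ fun s => (hpos s).ne').integral_hasStrictDerivAt 0 σ).hasDerivAt
  have hT0 : T 0 = 0 := intervalIntegral.integral_same
  have hM0 : 0 < M⁻¹ := inv_pos.2 ((hpos 0).trans_le (hM 0))
  have hgrowth : ∀ ⦃x y⦄, x ≤ y → M⁻¹ * (y - x) ≤ T y - T x :=
    mul_sub_le_image_sub_of_le_deriv (fun σ => (hT σ).differentiableAt) fun σ => by
      rw [(hT σ).deriv]; exact inv_anti₀ (hpos σ) (hM σ)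
  have hsurj : Function.Surjective T := by
    refine Continuous.surjective (continuous_iff_continuousAt.2 fun σ => (hT σ).continuousAt)
      (tendsto_atTop_mono' _ ?_ (tendsto_id.const_mul_atTop hM0))
      (tendsto_atBot_mono' _ ?_ (tendsto_id.const_mul_atBot hM0))
    · filter_upwards [eventually_ge_atTop 0] with y hy
      simpa [hT0] using hgrowth hy
    · filter_upwards [eventually_le_atBot 0] with x hx
      have := hgrowth hx
      rw [hT0] at this
      simp only [id]
      linarith
  let e := StrictMono.orderIsoOfSurjective T
    (strictMono_of_hasDerivAt_pos hT fun σ => inv_pos.2 (hpos σ)) hsurj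
  refine ⟨e.symm, e.symm_apply_apply, fun t => ?_⟩
  simpa using (hT (e.symm t)).of_local_left_inverse e.symm.continuous.continuousAt
    (inv_ne_zero (hpos _).ne') (Eventually.of_forall e.apply_symm_apply)

/-- The slope of `u ↦ u⁶ - u²` between `u` and `b`. -/
def potentialSlope (b u : ℝ) : ℝ :=
  u ^ 5 + u ^ 4 * b + u ^ 3 * b ^ 2 + u ^ 2 * b ^ 3 + u * b ^ 4 + b ^ 5 - u - b

lemma hasDerivAt_potentialSlope (b u : ℝ) :
    HasDerivAt (potentialSlope b)
      (5 * u ^ 4 + 4 * u ^ 3 * b + 3 * u ^ 2 * b ^ 2 + 2 * u * b ^ 3 + b ^ 4 - 1) u := by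
  refine HasDerivAt.congr_deriv ((hasDerivAt_pow 5 u).add ((hasDerivAt_pow 4 u).mul_const b)
    |>.add ((hasDerivAt_pow 3 u).mul_const (b ^ 2)) |>.add ((hasDerivAt_pow 2 u).mul_const (b ^ 3))
    |>.add ((hasDerivAt_id' u).mul_const (b ^ 4)) |>.add_const (b ^ 5) |>.sub (hasDerivAt_id' u)
    |>.sub_const b) ?_
  norm_num

lemma sub_mul_potentialSlope (b u : ℝ) :
    (b - u) * potentialSlope b u = u ^ 2 - u ^ 6 + (b ^ 6 - b ^ 2) := by
  unfold potentialSlope; ring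

lemma potentialSlope_ge {b u : ℝ} (hb : 1 ≤ b) (hu : 0 ≤ u) : b ^ 5 - b ≤ potentialSlope b u := by
  have hb4 : 1 ≤ b ^ 4 := one_le_pow₀ hb
  unfold potentialSlope
  have hb0 : 0 ≤ b := by linarith
  nlinarith [pow_nonneg hu 5, mul_nonneg (pow_nonneg hu 4) hb0,
    mul_nonneg (pow_nonneg hu 3) (sq_nonneg b), mul_nonneg (pow_nonneg hu 2) (pow_nonneg hb0 3),
    mul_nonneg hu (sub_nonneg.2 hb4)]

lemma potentialSlope_le {b u : ℝ} (hu : 0 ≤ u) (hub : u ≤ b) : potentialSlope b u ≤ 6 * b ^ 5 := by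
  have hb : 0 ≤ b := hu.trans hub
  unfold potentialSlope
  nlinarith [pow_le_pow_left₀ hu hub 5, mul_le_mul_of_nonneg_right (pow_le_pow_left₀ hu hub 4) hb,
    mul_le_mul_of_nonneg_right (pow_le_pow_left₀ hu hub 3) (sq_nonneg b),
    mul_le_mul_of_nonneg_right (pow_le_pow_left₀ hu hub 2) (pow_nonneg hb 3),
    mul_le_mul_of_nonneg_right hub (pow_nonneg hb 4)]

lemma potentialSlope_pos {b u : ℝ} (hb : 1 < b) (hu : 0 ≤ u) : 0 < potentialSlope b u :=
  (sub_pos.2 (lt_self_pow₀ hb (by norm_num : 1 < 5))).trans_le (potentialSlope_ge hb.le hu)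

/-- If `s' = tipSpeed b s` then `w = b - s²` satisfies `3 w'² = (b - w) * potentialSlope b w`.
The clamp `max 0` only acts where `s² > b`; it makes the speed positive and bounded on `ℝ`. -/
noncomputable def tipSpeed (b s : ℝ) : ℝ := √(potentialSlope b (max 0 (b - s ^ 2)) / 12)

section
variable {b : ℝ}

lemma tipSpeed_pos (hb : 1 < b) (s : ℝ) : 0 < tipSpeed b s :=
  sqrt_pos.2 (div_pos (potentialSlope_pos hb (le_max_left _ _)) (by norm_num))

lemma tipSpeed_eq_of_sq_le {s : ℝ} (hs : s ^ 2 ≤ b) :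
    tipSpeed b s = √(potentialSlope b (b - s ^ 2) / 12) := by
  rw [tipSpeed, max_eq_right (sub_nonneg.2 hs)]

lemma hasDerivAt_two_mul_mul_tipSpeed (hb : 1 < b) {s : ℝ} (hs : s ^ 2 < b) :
    HasDerivAt (fun s => 2 * s * tipSpeed b s)
      (((b - s ^ 2) ^ 5 - (b - s ^ 2) / 3) / tipSpeed b s) s := by
  have hR0 : 0 < potentialSlope b (b - s ^ 2) / 12 :=
    div_pos (potentialSlope_pos hb (by linarith)) (by norm_num)
  have hR :=
    ((hasDerivAt_potentialSlope b _).comp s ((hasDerivAt_pow 2 s).const_sub b)).div_const 12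
  have hlocal : tipSpeed b =ᶠ[𝓝 s] fun s => √(potentialSlope b (b - s ^ 2) / 12) := by
    filter_upwards [(continuous_pow 2).continuousAt.eventually_lt continuousAt_const hs] with y hy
    exact tipSpeed_eq_of_sq_le hy.le
  have hg : √(potentialSlope b (b - s ^ 2) / 12) = tipSpeed b s :=
    (tipSpeed_eq_of_sq_le hs.le).symm
  have hg2 : tipSpeed b s ^ 2 = potentialSlope b (b - s ^ 2) / 12 := by rw [← hg, sq_sqrt hR0.le]
  refine (((hasDerivAt_id' s).const_mul 2).mul
    ((hR.sqrt hR0.ne').congr_of_eventuallyEq hlocal)).congr_deriv ?_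
  rw [Function.comp_apply, hg]
  field_simp [(tipSpeed_pos hb s).ne']
  rw [hg2]
  unfold potentialSlope
  ring

lemma tipSpeed_le (hb : 1 < b) (s : ℝ) : tipSpeed b s ≤ √(b ^ 5 / 2) := by
  have hu : max 0 (b - s ^ 2) ≤ b := max_le (by linarith) (by nlinarith [sq_nonneg s])
  refine sqrt_le_sqrt ?_
  linarith [potentialSlope_le (le_max_left 0 (b - s ^ 2)) hu]

lemma continuous_tipSpeed : Continuous (tipSpeed b) := by
  unfold tipSpeed potentialSlope; fun_prop

end

theorem exists_tip_profile {b p : ℝ} (hb : 1 < b) (hp : 0 < p) (hpb : p < b) :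
    ∃ T > 0, ∃ w w' : ℝ → ℝ, (∀ τ, HasDerivAt w (w' τ) τ) ∧
      (∀ τ ∈ Icc (-T) 0, 0 < w τ ∧ HasDerivAt w' (w τ / 3 - w τ ^ 5) τ) ∧
      w (-T) = p ∧ 3 * w' (-T) ^ 2 = (b - p) * potentialSlope b p ∧ 0 ≤ w' (-T) ∧ w' 0 = 0 := by
  obtain ⟨S, hST, hS⟩ :=
    exists_hasDerivAt_comp_of_pos_of_le continuous_tipSpeed (tipSpeed_pos hb) (tipSpeed_le hb)
  have hS0 : S 0 = 0 := by simpa using hST 0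
  have hSmono : StrictMono S := strictMono_of_hasDerivAt_pos hS fun t => tipSpeed_pos hb _
  set σ := √(b - p)
  have hσ2 : σ ^ 2 = b - p := sq_sqrt (by linarith)
  set T := ∫ s in (0)..σ, (tipSpeed b s)⁻¹
  have hT : 0 < T := intervalIntegral.intervalIntegral_pos_of_pos_on
    ((continuous_tipSpeed.inv₀ fun s => (tipSpeed_pos hb s).ne').intervalIntegrable _ _)
    (fun s _ => inv_pos.2 (tipSpeed_pos hb s)) (sqrt_pos.2 (by linarith))
  have hST' : S T = σ := hST σ
  have hSneg : ∀ τ, HasDerivAt (fun τ => S (-τ)) (-tipSpeed b (S (-τ))) τ := fun τ =>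
    ((hS (-τ)).comp τ (hasDerivAt_neg' τ)).congr_deriv (mul_neg_one _)
  have hrange : ∀ τ ∈ Icc (-T) 0, S (-τ) ^ 2 ≤ b - p := fun τ hτ =>
    hσ2 ▸ pow_le_pow_left₀ (hS0 ▸ hSmono.monotone (by linarith [hτ.2]))
      (hST' ▸ hSmono.monotone (by linarith [hτ.1])) 2
  refine ⟨T, hT, fun τ => b - S (-τ) ^ 2, fun τ => 2 * S (-τ) * tipSpeed b (S (-τ)),
    fun τ => ?_, fun τ hτ => ⟨by linarith [hrange τ hτ], ?_⟩, by simp [hST', hσ2], ?_, ?_,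
    by simp [hS0]⟩
  · exact ((hSneg τ).pow 2).const_sub b |>.congr_deriv (by push_cast; ring)
  · refine ((hasDerivAt_two_mul_mul_tipSpeed hb (by linarith [hrange τ hτ])).comp τ
      (hSneg τ)).congr_deriv ?_
    field_simp [(tipSpeed_pos hb (S (-τ))).ne']
    ring
  · simp only [neg_neg, hST']
    rw [tipSpeed_eq_of_sq_le (by linarith), hσ2, sub_sub_cancel, mul_pow, mul_pow, hσ2,
      sq_sqrt (div_nonneg (potentialSlope_pos hb hp.le).le (by norm_num))]
    ring
  · simp only [neg_neg, hST']
    have := tipSpeed_pos hb σ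
    positivity

lemma HasDerivAt.const_mul_comp_mul_sub {w : ℝ → ℝ} {d a Λ x₀ x : ℝ}
    (h : HasDerivAt w d (Λ * (x - x₀))) :
    HasDerivAt (fun x => a * w (Λ * (x - x₀))) (a * Λ * d) x :=
  ((h.comp x (((hasDerivAt_id' x).sub_const x₀).const_mul Λ)).const_mul a).congr_deriv (by ring)

theorem exists_rescaled_solution {Λ : ℝ} (hΛ : 0 < Λ) {w w' : ℝ → ℝ}
    (hw : ∀ τ, HasDerivAt w (w' τ) τ)
    (hw' : ∀ τ ∈ Icc (-Λ) 0, 0 < w τ ∧ HasDerivAt w' (w τ / 3 - w τ ^ 5) τ) :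
    ∃ v v' v'' : ℝ → ℝ, ContinuousOn v'' (Icc 0 1) ∧
      (∀ x ∈ Icc (0:ℝ) 1, HasDerivWithinAt v (v' x) (Icc 0 1) x) ∧
      (∀ x ∈ Icc (0:ℝ) 1, HasDerivWithinAt v' (v'' x) (Icc 0 1) x) ∧
      (∀ x ∈ Icc (0:ℝ) 1, 0 < v x) ∧
      (∀ x ∈ Icc (0:ℝ) 1, v'' x + v x ^ 5 = Λ ^ 2 / 3 * v x) ∧
      v 0 = √Λ * w (-Λ) ∧ v' 0 = √Λ * Λ * w' (-Λ) ∧ v' 1 = √Λ * Λ * w' 0 := by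
  have hcont : Continuous w := continuous_iff_continuousAt.2 fun τ => (hw τ).continuousAt
  have hmem : ∀ x ∈ Icc (0:ℝ) 1, Λ * (x - 1) ∈ Icc (-Λ) 0 := fun x hx =>
    ⟨by nlinarith [hx.1], by nlinarith [hx.2]⟩
  have hsqΛ : √Λ ^ 2 = Λ := sq_sqrt hΛ.le
  refine ⟨fun x => √Λ * w (Λ * (x - 1)), fun x => √Λ * Λ * w' (Λ * (x - 1)),
    fun x => √Λ * Λ * Λ * (w (Λ * (x - 1)) / 3 - w (Λ * (x - 1)) ^ 5), by fun_prop,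
    fun x _ => (hw _).const_mul_comp_mul_sub.hasDerivWithinAt,
    fun x hx => (hw' _ (hmem x hx)).2.const_mul_comp_mul_sub.hasDerivWithinAt,
    fun x hx => mul_pos (sqrt_pos.2 hΛ) (hw' _ (hmem x hx)).1,
    fun x _ => by linear_combination (√Λ * w (Λ * (x - 1)) ^ 5 * (√Λ ^ 2 + Λ)) * hsqΛ,
    by simp, by simp, by simp⟩

lemma sqrt_mul_mul_eq_of_three_mul_sq_eq {Λ p y : ℝ} (hΛ : 0 ≤ Λ) (hp : 0 ≤ p) (hp1 : p ≤ 1)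
    (hy : 0 ≤ y) (h : 3 * y ^ 2 = 4 * (p ^ 2 - p ^ 6)) :
    √Λ * Λ * y = 2 / √3 * (√Λ * p) * √(Λ ^ 2 - (√Λ * p) ^ 4) := by
  have hp4 : p ^ 4 ≤ 1 := pow_le_one₀ hp hp1
  have hy_eq : y = 2 / √3 * p * √(1 - p ^ 4) := by
    rw [← sq_eq_sq₀ hy (by positivity), mul_pow, mul_pow, div_pow, sq_sqrt (by norm_num),
      sq_sqrt (by linarith)]
    linear_combination h / 3
  have hq4 : (√Λ * p) ^ 4 = Λ ^ 2 * p ^ 4 := by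
    rw [mul_pow, show √Λ ^ 4 = (√Λ ^ 2) ^ 2 by ring, sq_sqrt hΛ]
  rw [hq4, ← mul_one_sub, sqrt_mul' _ (by linarith), sqrt_sq hΛ, hy_eq]
  ring

lemma soliton_pos (x : ℝ) : 0 < soliton x := rpow_pos_of_pos (cosh_pos _) _

lemma soliton_lt_one {x : ℝ} (hx : x ≠ 0) : soliton x < 1 :=
  rpow_lt_one_of_one_lt_of_neg (one_lt_cosh.2 (by simp [hx])) (by norm_num)

lemma solitonL_div {Λ : ℝ} (hΛ : Λ ≠ 0) (x : ℝ) : solitonL Λ (x / Λ) = √Λ * soliton x := by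
  rw [solitonL, mul_div_cancel₀ _ hΛ]

lemma exists_one_lt_pow_six_sub_sq_eq {c : ℝ} (hc : 0 < c) :
    ∃ b, 1 < b ∧ b ^ 6 - b ^ 2 = c := by
  have hgrowth : c < (1 + c) ^ 6 - (1 + c) ^ 2 := by
    nlinarith [pow_pos hc 2, pow_pos hc 3, pow_pos hc 4, pow_pos hc 5, pow_pos hc 6]
  obtain ⟨b, hb, hbc⟩ := intermediate_value_Ioo (by linarith : (1:ℝ) ≤ 1 + c)
    (by fun_prop : Continuous fun b : ℝ => b ^ 6 - b ^ 2).continuousOn ⟨by norm_num [hc], hgrowth⟩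
  exact ⟨b, hb.1, hbc⟩

theorem stmt_9 (z : ℝ) (hz : 0 < z) :
    ∃ Λ : ℝ, 0 < Λ ∧ ∃ v v' v'' : ℝ → ℝ,
      ContinuousOn v'' (Set.Icc 0 1) ∧
      (∀ x ∈ Set.Icc (0:ℝ) 1, HasDerivWithinAt v (v' x) (Set.Icc 0 1) x) ∧
      (∀ x ∈ Set.Icc (0:ℝ) 1, HasDerivWithinAt v' (v'' x) (Set.Icc 0 1) x) ∧
      (∀ x ∈ Set.Icc (0:ℝ) 1, 0 < v x) ∧
      (∀ x ∈ Set.Icc (0:ℝ) 1, v'' x + (v x) ^ 5 = (Λ ^ 2 / 3) * v x) ∧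
      v 0 = solitonL Λ (z / Λ) ∧
      v' 0 = (2 / Real.sqrt 3) * solitonL Λ (z / Λ)
        * Real.sqrt (Λ ^ 2 - (solitonL Λ (z / Λ)) ^ 4) ∧
      v' 1 = 0 := by
  set p := soliton z with hp
  have hp0 : 0 < p := soliton_pos z
  have hp1 : p < 1 := soliton_lt_one hz.ne'
  obtain ⟨b, hb, hbp⟩ := exists_one_lt_pow_six_sub_sq_eq (c := 3 * (p ^ 2 - p ^ 6))
    (by nlinarith [pow_pos hp0 2, pow_lt_one₀ hp0.le hp1 (by norm_num : 4 ≠ 0)])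
  obtain ⟨Λ, hΛ, w, w', hw, hw', hwΛ, henergy, hw'Λ, hw'0⟩ :=
    exists_tip_profile hb hp0 (hp1.trans hb)
  have hslope : 3 * w' (-Λ) ^ 2 = 4 * (p ^ 2 - p ^ 6) := by
    rw [henergy, sub_mul_potentialSlope, hbp]; ring
  obtain ⟨v, v', v'', hv'', hv, hv', hvpos, hode, hv0, hv'0, hv'1⟩ :=
    exists_rescaled_solution hΛ hw hw'
  refine ⟨Λ, hΛ, v, v', v'', hv'', hv, hv', hvpos, hode, ?_, ?_, by rw [hv'1, hw'0, mul_zero]⟩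
  · rw [hv0, hwΛ, solitonL_div hΛ.ne']
  · rw [hv'0, solitonL_div hΛ.ne', ← hp]
    exact sqrt_mul_mul_eq_of_three_mul_sq_eq hΛ.le hp0.le hp1.le hw'Λ hslope
end

section
/- Sharp Gagliardo–Nirenberg inequality on the real line: if u : ℝ → ℝ is differentiable with u and u' square-integrable on ℝ, then ∫_ℝ u⁶ ≤ (4/π²)·(∫_ℝ u²)²·(∫_ℝ (u')²). (The constant 4/π² equals 3/μ_ℝ² with μ_ℝ = √3·π/2 the critical mass of the line.) -/
/-!
Write `M = ∫ u²`, `E = ∫ u'²`, `F x = ∫_{-∞}^x u²`, `θ = π F / M` and `c = π / (2M)`. Where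
`0 < F < M`, the corrector `D = (c/2) u⁴ cot θ` satisfies `u'² - c² u⁶ - D' = (u' - c u³ cot θ)² ≥ 0`,
so `c² ∫_a^b u⁶ ≤ ∫_a^b u'² + D a - D b`. The boundary terms are paid for by the tails of `E`:
from `u(a)² = 2 ∫_{-∞}^a u u'` and Cauchy–Schwarz, `u(a)⁴ ≤ 4 F(a) ∫_{-∞}^a u'²`, and `θ cot θ ≤ 1`
turns this into `D a ≤ ∫_{-∞}^a u'²`; symmetrically `-D b ≤ ∫_b^∞ u'²`. Hence `c² ∫_a^b u⁶ ≤ E`.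
Since `u⁴ ≤ 4ME` everywhere, the integral of `u⁶` over the two tails is at most `4ME` times
their mass, which is made arbitrarily small by the choice of `a` and `b`.
-/

open Real MeasureTheory Set Filter Topology

section CauchySchwarz

variable {α : Type*} [MeasurableSpace α] {μ : Measure α} {f g : α → ℝ}

lemma integrable_mul_of_integrable_sq (hf : AEStronglyMeasurable f μ)
    (hg : AEStronglyMeasurable g μ) (hf2 : Integrable (fun x => f x ^ 2) μ)
    (hg2 : Integrable (fun x => g x ^ 2) μ) : Integrable (fun x => f x * g x) μ := by
  refine ((hf2.add hg2).div_const 2).mono' (hf.mul hg) (ae_of_all _ fun x => ?_)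
  rw [norm_mul, Real.norm_eq_abs, Real.norm_eq_abs, Pi.add_apply]
  nlinarith [sq_nonneg (|f x| - |g x|), sq_abs (f x), sq_abs (g x)]

lemma sq_integral_mul_le (hf : AEStronglyMeasurable f μ) (hg : AEStronglyMeasurable g μ)
    (hf2 : Integrable (fun x => f x ^ 2) μ) (hg2 : Integrable (fun x => g x ^ 2) μ) :
    (∫ x, f x * g x ∂μ) ^ 2 ≤ (∫ x, f x ^ 2 ∂μ) * ∫ x, g x ^ 2 ∂μ := by
  have hfg := integrable_mul_of_integrable_sq hf hg hf2 hg2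
  have hquad : ∀ t : ℝ, 0 ≤ (∫ x, f x ^ 2 ∂μ) * (t * t) + 2 * (∫ x, f x * g x ∂μ) * t
      + ∫ x, g x ^ 2 ∂μ := fun t => by
    have hexp : ∫ x, (t * f x + g x) ^ 2 ∂μ = (∫ x, f x ^ 2 ∂μ) * (t * t)
        + 2 * (∫ x, f x * g x ∂μ) * t + ∫ x, g x ^ 2 ∂μ := by
      rw [integral_congr_ae (g := fun x => t * t * f x ^ 2 + 2 * t * (f x * g x) + g x ^ 2)
          (ae_of_all _ fun x => by ring),
        integral_add (Integrable.fun_add (hf2.const_mul _) (hfg.const_mul _)) hg2,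
        integral_add (hf2.const_mul _) (hfg.const_mul _), integral_const_mul, integral_const_mul]
      ring
    exact hexp ▸ integral_nonneg fun x => sq_nonneg _
  have := discrim_le_zero hquad
  rw [discrim] at this
  linarith

end CauchySchwarz

lemma Real.hasDerivAt_cot {x : ℝ} (hx : sin x ≠ 0) :
    HasDerivAt cot (-(1 + cot x ^ 2)) x := by
  have hcot : cot = fun y => cos y / sin y := funext cot_eq_cos_div_sin
  rw [hcot]
  refine ((hasDerivAt_cos x).div (hasDerivAt_sin x) hx).congr_deriv ?_
  field_simp
  ring

lemma Real.mul_cot_le_one {x : ℝ} (h0 : 0 < x) (hπ : x < π) : x * cot x ≤ 1 := by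
  rw [cot_eq_cos_div_sin]
  have hsin : 0 < sin x := sin_pos_of_pos_of_lt_pi h0 hπ
  rcases lt_or_ge x (π / 2) with hx | hx
  · have htan := lt_tan h0 hx
    have hcos : 0 < cos x := cos_pos_of_mem_Ioo ⟨by linarith, hx⟩
    rw [tan_eq_sin_div_cos, lt_div_iff₀ hcos] at htan
    rw [mul_div_assoc', div_le_one hsin]
    linarith
  · have hcos : cos x ≤ 0 := cos_nonpos_of_pi_div_two_le_of_le hx (by linarith)
    have : x * (cos x / sin x) ≤ 0 := mul_nonpos_of_nonneg_of_nonpos h0.le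
      (div_nonpos_of_nonpos_of_nonneg hcos hsin.le)
    linarith

lemma Real.cot_pi_sub (x : ℝ) : cot (π - x) = -cot x := by
  rw [cot_eq_cos_div_sin, cot_eq_cos_div_sin, cos_pi_sub, sin_pi_sub, neg_div]

lemma Real.mul_pow_four_mul_cot_le {M P A y : ℝ} (hP : 0 < P) (hPM : P < M) (hA : 0 ≤ A)
    (hy : y ^ 4 ≤ 4 * P * A) : π / (4 * M) * y ^ 4 * cot (π * P / M) ≤ A := by
  have hM : 0 < M := hP.trans hPM
  set θ := π * P / M with hθ
  have hθ0 : 0 < θ := by positivity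
  have hθπ : θ < π := by rw [div_lt_iff₀ hM]; nlinarith [pi_pos]
  rcases le_or_gt (cot θ) 0 with hcot | hcot
  · have : π / (4 * M) * y ^ 4 * cot θ ≤ 0 :=
      mul_nonpos_of_nonneg_of_nonpos (by positivity) hcot
    linarith
  · calc π / (4 * M) * y ^ 4 * cot θ ≤ π / (4 * M) * (4 * P * A) * cot θ := by gcongr
      _ = A * (θ * cot θ) := by rw [hθ]; field_simp
      _ ≤ A := mul_le_of_le_one_right hA (mul_cot_le_one hθ0 hθπ)

section CumulativeIntegral

variable {f : ℝ → ℝ}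

lemma integral_Iic_eq_add_intervalIntegral (hf : Integrable f) (a b : ℝ) :
    ∫ t in Iic b, f t = (∫ t in Iic a, f t) + ∫ t in a..b, f t := by
  rw [← intervalIntegral.integral_Iic_sub_Iic hf.integrableOn hf.integrableOn]
  ring

lemma hasDerivAt_integral_Iic (hf : Integrable f) {x : ℝ} (hcont : ContinuousAt f x) :
    HasDerivAt (fun y => ∫ t in Iic y, f t) (f x) x := by
  rw [funext (integral_Iic_eq_add_intervalIntegral hf 0)]
  exact (intervalIntegral.integral_hasDerivAt_right hf.intervalIntegrable
    hf.aestronglyMeasurable.stronglyMeasurableAtFilter hcont).const_add _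

lemma tendsto_integral_Iic_atBot (hf : Integrable f) :
    Tendsto (fun y => ∫ t in Iic y, f t) atBot (𝓝 0) := by
  have h := (intervalIntegral_tendsto_integral_Iic 0 hf.integrableOn tendsto_id).const_sub
    (∫ t in Iic (0 : ℝ), f t)
  rw [sub_self] at h
  exact h.congr fun y => by
    rw [id, integral_Iic_eq_add_intervalIntegral hf y 0, add_sub_cancel_right]

lemma tendsto_integral_Iic_atTop (hf : Integrable f) :
    Tendsto (fun y => ∫ t in Iic y, f t) atTop (𝓝 (∫ t, f t)) := by
  have h := (intervalIntegral_tendsto_integral_Ioi 0 hf.integrableOn tendsto_id).const_add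
    (∫ t in Iic (0 : ℝ), f t)
  rw [intervalIntegral.integral_Iic_add_Ioi hf.integrableOn hf.integrableOn] at h
  exact h.congr fun y => (integral_Iic_eq_add_intervalIntegral hf 0 y).symm

lemma monotone_integral_Iic (hf : Integrable f) (hf0 : 0 ≤ f) :
    Monotone fun y => ∫ t in Iic y, f t := fun _ _ hab =>
  setIntegral_mono_set hf.integrableOn (ae_of_all _ hf0) (Iic_subset_Iic.mpr hab).eventuallyLE

lemma Ioo_subset_range_integral_Iic (hf : Integrable f) (hcont : Continuous f) :
    Ioo 0 (∫ t, f t) ⊆ range fun y => ∫ t in Iic y, f t := by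
  intro δ ⟨hδ0, hδ1⟩
  obtain ⟨a, ha⟩ := ((tendsto_integral_Iic_atBot hf).eventually (eventually_lt_nhds hδ0)).exists
  obtain ⟨b, hb⟩ := ((tendsto_integral_Iic_atTop hf).eventually (eventually_gt_nhds hδ1)).exists
  have hF : Continuous fun y => ∫ t in Iic y, f t := continuous_iff_continuousAt.mpr fun x =>
    (hasDerivAt_integral_Iic hf hcont.continuousAt).continuousAt
  exact intermediate_value_univ a b hF ⟨ha.le, hb.le⟩

end CumulativeIntegral

structure IsDifferentiableH1 (u : ℝ → ℝ) : Prop where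
  differentiable : Differentiable ℝ u
  integrable_sq : Integrable fun x => u x ^ 2
  integrable_deriv_sq : Integrable fun x => deriv u x ^ 2

noncomputable def leftMass (u : ℝ → ℝ) (x : ℝ) : ℝ := ∫ t in Iic x, u t ^ 2

noncomputable def gnCorrector (u : ℝ → ℝ) (x : ℝ) : ℝ :=
  π / (4 * ∫ t, u t ^ 2) * u x ^ 4 * cot (π * leftMass u x / ∫ t, u t ^ 2)

namespace IsDifferentiableH1

variable {u : ℝ → ℝ}

lemma integrable_mul_deriv (hu : IsDifferentiableH1 u) :
    Integrable fun x => u x * deriv u x :=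
  integrable_mul_of_integrable_sq hu.differentiable.continuous.aestronglyMeasurable
    (measurable_deriv u).aestronglyMeasurable hu.integrable_sq hu.integrable_deriv_sq

lemma hasDerivAt_sq (hu : IsDifferentiableH1 u) (x : ℝ) :
    HasDerivAt (fun y => u y ^ 2) (2 * (u x * deriv u x)) x :=
  ((hu.differentiable x).hasDerivAt.pow 2).congr_deriv (by ring)

lemma sq_eq_integral_Iic (hu : IsDifferentiableH1 u) (b : ℝ) :
    u b ^ 2 = 2 * ∫ x in Iic b, u x * deriv u x := by
  have hint := hu.integrable_mul_deriv.const_mul 2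
  have hlim := tendsto_zero_of_hasDerivAt_of_integrableOn_Iic (a := 0)
    (fun x _ => hu.hasDerivAt_sq x) hint.integrableOn hu.integrable_sq.integrableOn
  rw [← integral_const_mul, integral_Iic_of_hasDerivAt_of_tendsto'
    (fun x _ => hu.hasDerivAt_sq x) hint.integrableOn hlim, sub_zero]

lemma sq_eq_neg_integral_Ioi (hu : IsDifferentiableH1 u) (b : ℝ) :
    u b ^ 2 = -(2 * ∫ x in Ioi b, u x * deriv u x) := by
  have hint := hu.integrable_mul_deriv.const_mul 2
  have hlim := tendsto_zero_of_hasDerivAt_of_integrableOn_Ioi (a := 0)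
    (fun x _ => hu.hasDerivAt_sq x) hint.integrableOn hu.integrable_sq.integrableOn
  rw [← integral_const_mul, integral_Ioi_of_hasDerivAt_of_tendsto'
    (fun x _ => hu.hasDerivAt_sq x) hint.integrableOn hlim, zero_sub, neg_neg]

lemma sq_setIntegral_mul_deriv_le (hu : IsDifferentiableH1 u) (s : Set ℝ) :
    (∫ x in s, u x * deriv u x) ^ 2 ≤ (∫ x in s, u x ^ 2) * ∫ x in s, deriv u x ^ 2 :=
  sq_integral_mul_le hu.differentiable.continuous.aestronglyMeasurable
    (measurable_deriv u).aestronglyMeasurable hu.integrable_sq.restrict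
    hu.integrable_deriv_sq.restrict

lemma pow_four_le_integral_Iic (hu : IsDifferentiableH1 u) (b : ℝ) :
    u b ^ 4 ≤ 4 * (∫ x in Iic b, u x ^ 2) * ∫ x in Iic b, deriv u x ^ 2 := by
  have := hu.sq_setIntegral_mul_deriv_le (Iic b)
  rw [show u b ^ 4 = (u b ^ 2) ^ 2 by ring, hu.sq_eq_integral_Iic]
  linarith

lemma pow_four_le_integral_Ioi (hu : IsDifferentiableH1 u) (b : ℝ) :
    u b ^ 4 ≤ 4 * (∫ x in Ioi b, u x ^ 2) * ∫ x in Ioi b, deriv u x ^ 2 := by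
  have := hu.sq_setIntegral_mul_deriv_le (Ioi b)
  rw [show u b ^ 4 = (u b ^ 2) ^ 2 by ring, hu.sq_eq_neg_integral_Ioi]
  linarith

lemma pow_four_le (hu : IsDifferentiableH1 u) (b : ℝ) :
    u b ^ 4 ≤ 4 * (∫ x, u x ^ 2) * ∫ x, deriv u x ^ 2 := by
  calc u b ^ 4 ≤ 4 * (∫ x in Iic b, u x ^ 2) * ∫ x in Iic b, deriv u x ^ 2 :=
        hu.pow_four_le_integral_Iic b
    _ ≤ 4 * (∫ x, u x ^ 2) * ∫ x, deriv u x ^ 2 := by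
      gcongr 4 * ?_ * ?_
      · exact setIntegral_le_integral hu.integrable_sq (ae_of_all _ fun x => sq_nonneg _)
      · exact setIntegral_le_integral hu.integrable_deriv_sq (ae_of_all _ fun x => sq_nonneg _)

lemma pow_six_le (hu : IsDifferentiableH1 u) (x : ℝ) :
    u x ^ 6 ≤ 4 * (∫ t, u t ^ 2) * (∫ t, deriv u t ^ 2) * u x ^ 2 := by
  rw [show u x ^ 6 = u x ^ 4 * u x ^ 2 by ring]
  exact mul_le_mul_of_nonneg_right (hu.pow_four_le x) (sq_nonneg _)

lemma integrable_pow_six (hu : IsDifferentiableH1 u) : Integrable fun x => u x ^ 6 :=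
  (hu.integrable_sq.const_mul _).mono' (hu.differentiable.continuous.pow 6).aestronglyMeasurable
    (ae_of_all _ fun x => by
      rw [Real.norm_eq_abs, abs_of_nonneg (by positivity)]
      exact hu.pow_six_le x)

lemma setIntegral_pow_six_le (hu : IsDifferentiableH1 u) (s : Set ℝ) :
    ∫ x in s, u x ^ 6 ≤ 4 * (∫ x, u x ^ 2) * (∫ x, deriv u x ^ 2) * ∫ x in s, u x ^ 2 := by
  rw [← integral_const_mul]
  exact setIntegral_mono hu.integrable_pow_six.integrableOn
    (hu.integrable_sq.const_mul _).integrableOn hu.pow_six_le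

lemma hasDerivAt_leftMass (hu : IsDifferentiableH1 u) (x : ℝ) :
    HasDerivAt (leftMass u) (u x ^ 2) x :=
  hasDerivAt_integral_Iic hu.integrable_sq (hu.differentiable.continuous.pow 2).continuousAt

lemma monotone_leftMass (hu : IsDifferentiableH1 u) : Monotone (leftMass u) :=
  monotone_integral_Iic hu.integrable_sq fun x => sq_nonneg (u x)

lemma hasDerivAt_gnCorrector (hu : IsDifferentiableH1 u) {x : ℝ} (h0 : 0 < leftMass u x)
    (h1 : leftMass u x < ∫ t, u t ^ 2) :
    HasDerivAt (gnCorrector u)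
      (deriv u x ^ 2 - (π / (2 * ∫ t, u t ^ 2)) ^ 2 * u x ^ 6
        - (deriv u x - π / (2 * ∫ t, u t ^ 2) * u x ^ 3
            * cot (π * leftMass u x / ∫ t, u t ^ 2)) ^ 2) x := by
  set M := ∫ t, u t ^ 2
  have hM : 0 < M := h0.trans h1
  have hθ0 : 0 < π * leftMass u x / M := by positivity
  have hθπ : π * leftMass u x / M < π := by rw [div_lt_iff₀ hM]; nlinarith [pi_pos]
  have hcot := (hasDerivAt_cot (sin_pos_of_pos_of_lt_pi hθ0 hθπ).ne').comp x
    (((hu.hasDerivAt_leftMass x).const_mul π).div_const M)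
  have hu4 := (hu.differentiable x).hasDerivAt.pow 4
  refine ((hu4.const_mul (π / (4 * M))).mul hcot).congr_deriv ?_
  simp only [Function.comp_apply, Pi.pow_apply]
  field_simp
  ring

lemma leftMass_add_integral_Ioi (hu : IsDifferentiableH1 u) (b : ℝ) :
    leftMass u b + ∫ x in Ioi b, u x ^ 2 = ∫ x, u x ^ 2 :=
  intervalIntegral.integral_Iic_add_Ioi hu.integrable_sq.integrableOn hu.integrable_sq.integrableOn

lemma gnCorrector_sub_le (hu : IsDifferentiableH1 u) {a b : ℝ} (hab : a ≤ b)
    (ha : 0 < leftMass u a) (hb : leftMass u b < ∫ t, u t ^ 2) :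
    gnCorrector u b - gnCorrector u a ≤
      ∫ x in a..b, (deriv u x ^ 2 - (π / (2 * ∫ t, u t ^ 2)) ^ 2 * u x ^ 6) := by
  have hmem : ∀ x ∈ Icc a b, 0 < leftMass u x ∧ leftMass u x < ∫ t, u t ^ 2 := fun x hx =>
    ⟨ha.trans_le (hu.monotone_leftMass hx.1), (hu.monotone_leftMass hx.2).trans_lt hb⟩
  have hderiv : ∀ x ∈ Icc a b, HasDerivAt (gnCorrector u) _ x := fun x hx =>
    hu.hasDerivAt_gnCorrector (hmem x hx).1 (hmem x hx).2
  refine intervalIntegral.sub_le_integral_of_hasDeriv_right_of_le hab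
    (fun x hx => (hderiv x hx).continuousAt.continuousWithinAt)
    (fun x hx => (hderiv x (Ioo_subset_Icc_self hx)).hasDerivWithinAt)
    (hu.integrable_deriv_sq.sub (hu.integrable_pow_six.const_mul _)).integrableOn
    (fun x _ => sub_le_self _ (sq_nonneg _))

lemma gnCorrector_le_setIntegral_Iic (hu : IsDifferentiableH1 u) {a : ℝ}
    (h0 : 0 < leftMass u a) (h1 : leftMass u a < ∫ t, u t ^ 2) :
    gnCorrector u a ≤ ∫ x in Iic a, deriv u x ^ 2 :=
  mul_pow_four_mul_cot_le h0 h1 (setIntegral_nonneg measurableSet_Iic fun _ _ => sq_nonneg _)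
    (hu.pow_four_le_integral_Iic a)

lemma neg_gnCorrector_le_setIntegral_Ioi (hu : IsDifferentiableH1 u) {b : ℝ}
    (h0 : 0 < leftMass u b) (h1 : leftMass u b < ∫ t, u t ^ 2) :
    -gnCorrector u b ≤ ∫ x in Ioi b, deriv u x ^ 2 := by
  set M := ∫ t, u t ^ 2
  have hM : 0 < M := h0.trans h1
  have hsplit := hu.leftMass_add_integral_Ioi b
  have hcot : cot (π * (∫ x in Ioi b, u x ^ 2) / M) = -cot (π * leftMass u b / M) := by
    rw [← cot_pi_sub]
    congr 1
    field_simp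
    linarith
  have := mul_pow_four_mul_cot_le (M := M) (by linarith) (by linarith)
    (setIntegral_nonneg measurableSet_Ioi fun _ _ => sq_nonneg _) (hu.pow_four_le_integral_Ioi b)
  rw [hcot] at this
  rw [gnCorrector]
  linarith

lemma intervalIntegral_pow_six_le (hu : IsDifferentiableH1 u) {a b : ℝ} (hab : a ≤ b)
    (ha : 0 < leftMass u a) (hb : leftMass u b < ∫ t, u t ^ 2) :
    ∫ x in a..b, u x ^ 6 ≤ 4 / π ^ 2 * (∫ t, u t ^ 2) ^ 2 * ∫ t, deriv u t ^ 2 := by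
  set M := ∫ t, u t ^ 2
  have hmono := hu.monotone_leftMass hab
  have hM : 0 < M := by linarith
  have hsub := hu.gnCorrector_sub_le hab ha hb
  rw [intervalIntegral.integral_sub hu.integrable_deriv_sq.intervalIntegrable
    (hu.integrable_pow_six.const_mul _).intervalIntegrable, intervalIntegral.integral_const_mul]
    at hsub
  have hleft := hu.gnCorrector_le_setIntegral_Iic ha (hmono.trans_lt hb)
  have hright := hu.neg_gnCorrector_le_setIntegral_Ioi (ha.trans_le hmono) hb
  have hsplit : (∫ x in Iic a, deriv u x ^ 2) + (∫ x in a..b, deriv u x ^ 2)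
      + ∫ x in Ioi b, deriv u x ^ 2 = ∫ x, deriv u x ^ 2 := by
    rw [← integral_Iic_eq_add_intervalIntegral hu.integrable_deriv_sq,
      intervalIntegral.integral_Iic_add_Ioi hu.integrable_deriv_sq.integrableOn
        hu.integrable_deriv_sq.integrableOn]
  rw [show 4 / π ^ 2 * M ^ 2 * ∫ t, deriv u t ^ 2
      = (∫ t, deriv u t ^ 2) / (π / (2 * M)) ^ 2 by field_simp; ring,
    le_div_iff₀ (by positivity)]
  linarith

lemma integral_pow_six_le_add (hu : IsDifferentiableH1 u) {δ : ℝ} (hδ : 0 < δ)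
    (hδM : δ < (∫ x, u x ^ 2) / 2) :
    ∫ x, u x ^ 6 ≤ 4 / π ^ 2 * (∫ x, u x ^ 2) ^ 2 * (∫ x, deriv u x ^ 2)
      + 2 * (4 * (∫ x, u x ^ 2) * (∫ x, deriv u x ^ 2)) * δ := by
  set M := ∫ x, u x ^ 2
  have hrange := Ioo_subset_range_integral_Iic hu.integrable_sq (hu.differentiable.continuous.pow 2)
  obtain ⟨a, ha⟩ : ∃ a, leftMass u a = δ := hrange ⟨hδ, by linarith⟩
  obtain ⟨b, hb⟩ : ∃ b, leftMass u b = M - δ := hrange ⟨by linarith, by linarith⟩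
  have hab : a ≤ b := by
    by_contra! h
    linarith [hu.monotone_leftMass h.le]
  have hmid := hu.intervalIntegral_pow_six_le hab (ha ▸ hδ) (by linarith)
  have hleft := hu.setIntegral_pow_six_le (Iic a)
  have hright := hu.setIntegral_pow_six_le (Ioi b)
  have hIoi : ∫ x in Ioi b, u x ^ 2 = δ := by
    linarith [hu.leftMass_add_integral_Ioi b]
  have hsplit : (∫ x in Iic a, u x ^ 6) + (∫ x in a..b, u x ^ 6) + ∫ x in Ioi b, u x ^ 6
      = ∫ x, u x ^ 6 := by
    rw [← integral_Iic_eq_add_intervalIntegral hu.integrable_pow_six,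
      intervalIntegral.integral_Iic_add_Ioi hu.integrable_pow_six.integrableOn
        hu.integrable_pow_six.integrableOn]
  rw [leftMass] at ha
  rw [ha] at hleft
  rw [hIoi] at hright
  linarith

end IsDifferentiableH1

theorem stmt_17 (u : ℝ → ℝ) (hu : Differentiable ℝ u)
    (hu2 : Integrable (fun x => (u x) ^ 2))
    (hu'2 : Integrable (fun x => (deriv u x) ^ 2)) :
    ∫ x : ℝ, (u x) ^ 6
      ≤ (4 / Real.pi ^ 2) * (∫ x : ℝ, (u x) ^ 2) ^ 2 * ∫ x : ℝ, (deriv u x) ^ 2 := by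
  have hH1 : IsDifferentiableH1 u := ⟨hu, hu2, hu'2⟩
  set M := ∫ x, u x ^ 2
  set E := ∫ x, deriv u x ^ 2
  rcases (integral_nonneg fun x => sq_nonneg (u x) : 0 ≤ M).eq_or_lt with hM | hM
  · have h := hH1.setIntegral_pow_six_le univ
    rw [setIntegral_univ, setIntegral_univ, ← hM] at h
    rw [show M = 0 from hM.symm]
    simpa using h
  · have hlim : Tendsto (fun δ => 4 / π ^ 2 * M ^ 2 * E + 2 * (4 * M * E) * δ) (𝓝[>] 0)
        (𝓝 (4 / π ^ 2 * M ^ 2 * E)) :=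
      tendsto_nhdsWithin_of_tendsto_nhds ((by fun_prop : Continuous fun δ : ℝ =>
        4 / π ^ 2 * M ^ 2 * E + 2 * (4 * M * E) * δ).tendsto' 0 _ (by simp))
    refine ge_of_tendsto hlim ?_
    filter_upwards [Ioo_mem_nhdsGT (half_pos hM)] with δ hδ
    exact hH1.integral_pow_six_le_add hδ.1 hδ.2
end

section
/- Sharp Gagliardo–Nirenberg inequality on the half-line: if u : ℝ → ℝ is continuous on [0, ∞), differentiable on (0, ∞), with u and u' square-integrable on (0, ∞), then ∫₀^∞ u⁶ ≤ (16/π²)·(∫₀^∞ u²)²·(∫₀^∞ (u')²). (The constant 16/π² equals 3/μ_{ℝ⁺}² with μ_{ℝ⁺} = √3·π/4 the critical mass of the half-line.) -/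
/-!
Let `S = sup u²` and, for `β > S`, let `G_β(s) = ∫₀ˢ √(β² - t²) dt`. Since `u² → 0` at
infinity, `G_β(u(x)²)` is bounded by the total variation `∫ |2 u u' √(β² - u⁴)|`, which by
AM-GM is at most `λ ∫ u'² + (β² ∫ u² - ∫ u⁶) / λ` for every `λ > 0`. Taking the supremum over
`x` and letting `β ↓ S` gives `π S² / 4 ≤ λ E + (S² M - I) / λ`; optimising first in `λ` and
then in `S` yields `I ≤ 16 M² E / π²`.
-/

open Real MeasureTheory Set Filter Topology

noncomputable def sqrtSubSqAntideriv (β s : ℝ) : ℝ :=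
  (s * √(β ^ 2 - s ^ 2) + β ^ 2 * arcsin (s / β)) / 2

lemma continuous_sqrtSubSqAntideriv (β : ℝ) : Continuous (sqrtSubSqAntideriv β) := by
  unfold sqrtSubSqAntideriv
  fun_prop

lemma hasDerivAt_sqrtSubSqAntideriv {β s : ℝ} (hs : |s| < β) :
    HasDerivAt (sqrtSubSqAntideriv β) √(β ^ 2 - s ^ 2) s := by
  obtain ⟨hs₁, hs₂⟩ := abs_lt.mp hs
  have hβ : 0 < β := (abs_nonneg s).trans_lt hs
  have hD : 0 < β ^ 2 - s ^ 2 := by nlinarith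
  have hsqrt :
      HasDerivAt (fun t => √(β ^ 2 - t ^ 2)) (-(2 * s) / (2 * √(β ^ 2 - s ^ 2))) s := by
    simpa using ((hasDerivAt_pow 2 s).const_sub (β ^ 2)).sqrt hD.ne'
  have harcsin : HasDerivAt (fun t => arcsin (t / β)) (1 / √(1 - (s / β) ^ 2) * (1 / β)) s :=
    (hasDerivAt_arcsin (by rw [ne_eq, div_eq_iff hβ.ne']; linarith)
      (by rw [ne_eq, div_eq_iff hβ.ne']; linarith)).comp s ((hasDerivAt_id' s).div_const β)
  have hsqrt_div : √(1 - (s / β) ^ 2) = √(β ^ 2 - s ^ 2) / β := by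
    rw [← sqrt_sq hβ.le, ← sqrt_div' _ (sq_nonneg β), sqrt_sq hβ.le]
    congr 1
    field_simp
  refine (((hasDerivAt_id' s).mul hsqrt).add (harcsin.const_mul (β ^ 2))).div_const 2
    |>.congr_deriv ?_
  rw [hsqrt_div]
  field_simp
  linear_combination -sq_sqrt hD.le

lemma abs_le_integral_Ioi_abs_of_tendsto_zero {f f' : ℝ → ℝ} {a x : ℝ}
    (hf : ∀ y ∈ Ioi a, HasDerivAt f (f' y) y) (hf' : IntegrableOn f' (Ioi a))
    (hlim : Tendsto f atTop (𝓝 0)) (hx : a < x) :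
    |f x| ≤ ∫ y in Ioi a, |f' y| := by
  have hsub : Ioi x ⊆ Ioi a := Ioi_subset_Ioi hx.le
  have hftc : ∫ y in Ioi x, f' y = 0 - f x :=
    integral_Ioi_of_hasDerivAt_of_tendsto (hf x hx).continuousAt.continuousWithinAt
      (fun y hy => hf y (hsub hy)) (hf'.mono_set hsub) hlim
  calc |f x| = |∫ y in Ioi x, f' y| := by rw [hftc, zero_sub, abs_neg]
    _ ≤ ∫ y in Ioi x, |f' y| := abs_integral_le_integral_abs
    _ ≤ ∫ y in Ioi a, |f' y| :=
      setIntegral_mono_set hf'.abs (.of_forall fun _ => abs_nonneg _) hsub.eventuallyLE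

lemma abs_sqrt_sub_sq_mul_le {β v w l : ℝ} (hl : 0 < l) (hv : v ^ 2 ≤ β) :
    |√(β ^ 2 - (v ^ 2) ^ 2) * (2 * v * w)| ≤ l * w ^ 2 + (β ^ 2 * v ^ 2 - v ^ 6) / l := by
  have hr : β ^ 2 * v ^ 2 - v ^ 6 = (|v| * √(β ^ 2 - (v ^ 2) ^ 2)) ^ 2 := by
    rw [mul_pow, sq_sqrt (sub_nonneg.2 (pow_le_pow_left₀ (sq_nonneg v) hv 2)), sq_abs]
    ring
  rw [abs_mul, abs_of_nonneg (sqrt_nonneg _), abs_mul, abs_mul, abs_two, hr,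
    ← sub_le_iff_le_add', le_div_iff₀ hl, ← sq_abs w]
  nlinarith [sq_nonneg (l * |w| - |v| * √(β ^ 2 - (v ^ 2) ^ 2))]

lemma sq_mul_le_of_forall_le_mul_add_div {c t M E I : ℝ} (hct : 0 < c * t) (hE : 0 ≤ E)
    (h : ∀ l > 0, c * t ≤ l * E + (t * M - I) / l) : c ^ 2 * I ≤ M ^ 2 * E := by
  have hE : 0 < E := by
    refine hE.lt_of_ne' fun hE0 => ?_
    have hB : 0 < t * M - I := hct.trans_le (by simpa [hE0] using h 1 one_pos)
    have := h (2 * (t * M - I) / (c * t)) (by positivity)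
    rw [hE0, mul_zero, zero_add, div_div_eq_mul_div, mul_comm (t * M - I),
      mul_div_mul_right _ _ hB.ne'] at this
    linarith
  have hquad : (c * t) ^ 2 ≤ 4 * E * (t * M - I) := by
    have := h (c * t / (2 * E)) (by positivity)
    rw [div_mul_eq_mul_div, mul_div_mul_right _ _ hE.ne', div_div_eq_mul_div,
      ← sub_le_iff_le_add', le_div_iff₀ hct] at this
    nlinarith
  nlinarith [sq_nonneg (c ^ 2 * t - 2 * E * M)]

section HalfLine

variable {u : ℝ → ℝ} {a : ℝ}

lemma aestronglyMeasurable_of_hasDerivAt (hu : ∀ x ∈ Ioi a, HasDerivAt u (deriv u x) x) :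
    AEStronglyMeasurable u (volume.restrict (Ioi a)) :=
  ContinuousOn.aestronglyMeasurable (fun x hx => (hu x hx).continuousAt.continuousWithinAt)
    measurableSet_Ioi

lemma hasDerivAt_sq_of_hasDerivAt (hu : ∀ x ∈ Ioi a, HasDerivAt u (deriv u x) x) {x : ℝ}
    (hx : a < x) : HasDerivAt (fun y => u y ^ 2) (2 * u x * deriv u x) x :=
  (hu x hx).pow 2 |>.congr_deriv (by ring)

lemma integrableOn_pow_six_of_sq_le (hu : ∀ x ∈ Ioi a, HasDerivAt u (deriv u x) x)
    (hu2 : IntegrableOn (fun x => u x ^ 2) (Ioi a)) {β : ℝ}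
    (hβ : ∀ x ∈ Ioi a, u x ^ 2 ≤ β) :
    IntegrableOn (fun x => u x ^ 6) (Ioi a) := by
  refine (hu2.const_mul (β ^ 2)).mono' ((aestronglyMeasurable_of_hasDerivAt hu).pow 6) ?_
  filter_upwards [self_mem_ae_restrict measurableSet_Ioi] with x hx
  rw [norm_of_nonneg (by positivity)]
  have := pow_le_pow_left₀ (sq_nonneg (u x)) (hβ x hx) 2
  nlinarith [sq_nonneg (u x)]

lemma integrableOn_two_mul_mul_deriv (hu : ∀ x ∈ Ioi a, HasDerivAt u (deriv u x) x)
    (hu2 : IntegrableOn (fun x => u x ^ 2) (Ioi a))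
    (hu'2 : IntegrableOn (fun x => deriv u x ^ 2) (Ioi a)) :
    IntegrableOn (fun x => 2 * u x * deriv u x) (Ioi a) := by
  have := ((memLp_two_iff_integrable_sq (aestronglyMeasurable_of_hasDerivAt hu)).2 hu2)
    |>.integrable_mul
      ((memLp_two_iff_integrable_sq (measurable_deriv u).aestronglyMeasurable).2 hu'2)
  exact (this.const_mul 2).congr (.of_forall fun x => by simp only [Pi.mul_apply]; ring)

lemma tendsto_sq_atTop_zero (hu : ∀ x ∈ Ioi a, HasDerivAt u (deriv u x) x)
    (hu2 : IntegrableOn (fun x => u x ^ 2) (Ioi a))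
    (hu'2 : IntegrableOn (fun x => deriv u x ^ 2) (Ioi a)) :
    Tendsto (fun x => u x ^ 2) atTop (𝓝 0) :=
  tendsto_zero_of_hasDerivAt_of_integrableOn_Ioi (f := fun x => u x ^ 2)
    (fun _ hx => hasDerivAt_sq_of_hasDerivAt hu hx)
    (integrableOn_two_mul_mul_deriv hu hu2 hu'2) hu2

lemma bddAbove_sq_image (hu : ∀ x ∈ Ioi a, HasDerivAt u (deriv u x) x)
    (hu2 : IntegrableOn (fun x => u x ^ 2) (Ioi a))
    (hu'2 : IntegrableOn (fun x => deriv u x ^ 2) (Ioi a)) :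
    BddAbove ((fun x => u x ^ 2) '' Ioi a) := by
  refine ⟨∫ y in Ioi a, |2 * u y * deriv u y|, ?_⟩
  rintro _ ⟨x, hx, rfl⟩
  exact (le_abs_self _).trans <| abs_le_integral_Ioi_abs_of_tendsto_zero (f := fun y => u y ^ 2)
    (fun _ hy => hasDerivAt_sq_of_hasDerivAt hu hy) (integrableOn_two_mul_mul_deriv hu hu2 hu'2)
    (tendsto_sq_atTop_zero hu hu2 hu'2) hx

lemma sqrtSubSqAntideriv_sq_le (hu : ∀ x ∈ Ioi a, HasDerivAt u (deriv u x) x)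
    (hu2 : IntegrableOn (fun x => u x ^ 2) (Ioi a))
    (hu'2 : IntegrableOn (fun x => deriv u x ^ 2) (Ioi a))
    {β l x : ℝ} (hβ : ∀ y ∈ Ioi a, u y ^ 2 < β) (hl : 0 < l) (hx : a < x) :
    sqrtSubSqAntideriv β (u x ^ 2) ≤ l * (∫ y in Ioi a, deriv u y ^ 2)
      + (β ^ 2 * (∫ y in Ioi a, u y ^ 2) - ∫ y in Ioi a, u y ^ 6) / l := by
  set F' := fun y => √(β ^ 2 - (u y ^ 2) ^ 2) * (2 * u y * deriv u y)
  have hF : ∀ y ∈ Ioi a, HasDerivAt (fun y => sqrtSubSqAntideriv β (u y ^ 2)) (F' y) y :=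
    fun y hy => (hasDerivAt_sqrtSubSqAntideriv (by rw [abs_sq]; exact hβ y hy)).comp
      (h := fun y => u y ^ 2) y (hasDerivAt_sq_of_hasDerivAt hu hy)
  have h6 := integrableOn_pow_six_of_sq_le hu hu2 fun y hy => (hβ y hy).le
  have hsub : IntegrableOn (fun y => β ^ 2 * u y ^ 2 - u y ^ 6) (Ioi a) :=
    (hu2.const_mul _).sub h6
  have hdom :
      IntegrableOn (fun y => l * deriv u y ^ 2 + (β ^ 2 * u y ^ 2 - u y ^ 6) / l) (Ioi a) :=
    (hu'2.const_mul l).add (hsub.div_const l)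
  have hbound : ∀ y ∈ Ioi a, |F' y| ≤ l * deriv u y ^ 2 + (β ^ 2 * u y ^ 2 - u y ^ 6) / l :=
    fun y hy => abs_sqrt_sub_sq_mul_le hl (hβ y hy).le
  have hF' : IntegrableOn F' (Ioi a) := by
    refine hdom.mono' ?_ (ae_restrict_of_forall_mem measurableSet_Ioi hbound)
    have := aestronglyMeasurable_of_hasDerivAt hu
    have := (measurable_deriv u).aestronglyMeasurable (μ := volume.restrict (Ioi a))
    fun_prop
  have hlim : Tendsto (fun y => sqrtSubSqAntideriv β (u y ^ 2)) atTop (𝓝 0) := by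
    have h0 : sqrtSubSqAntideriv β 0 = 0 := by simp [sqrtSubSqAntideriv]
    have := ((continuous_sqrtSubSqAntideriv β).tendsto 0).comp (tendsto_sq_atTop_zero hu hu2 hu'2)
    rwa [h0] at this
  calc _ ≤ |sqrtSubSqAntideriv β (u x ^ 2)| := le_abs_self _
    _ ≤ ∫ y in Ioi a, |F' y| :=
      abs_le_integral_Ioi_abs_of_tendsto_zero (f := fun y => sqrtSubSqAntideriv β (u y ^ 2))
        hF hF' hlim hx
    _ ≤ ∫ y in Ioi a, (l * deriv u y ^ 2 + (β ^ 2 * u y ^ 2 - u y ^ 6) / l) :=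
      setIntegral_mono_on hF'.abs hdom measurableSet_Ioi hbound
    _ = _ := by
      rw [integral_add (hu'2.const_mul l) (hsub.div_const l), integral_div,
        integral_sub (hu2.const_mul _) h6, integral_const_mul, integral_const_mul]

lemma sqrtSubSqAntideriv_le_of_isLUB (hu : ∀ x ∈ Ioi a, HasDerivAt u (deriv u x) x)
    (hu2 : IntegrableOn (fun x => u x ^ 2) (Ioi a))
    (hu'2 : IntegrableOn (fun x => deriv u x ^ 2) (Ioi a))
    {S β l : ℝ} (hS : IsLUB ((fun x => u x ^ 2) '' Ioi a) S) (hβ : S < β) (hl : 0 < l) :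
    sqrtSubSqAntideriv β S ≤ l * (∫ y in Ioi a, deriv u y ^ 2)
      + (β ^ 2 * (∫ y in Ioi a, u y ^ 2) - ∫ y in Ioi a, u y ^ 6) / l := by
  refine (isClosed_le (continuous_sqrtSubSqAntideriv β) continuous_const).closure_subset_iff.2
    ?_ (hS.mem_closure (nonempty_Ioi.image _))
  rintro _ ⟨x, hx, rfl⟩
  exact sqrtSubSqAntideriv_sq_le hu hu2 hu'2
    (fun y hy => (hS.1 (mem_image_of_mem _ hy)).trans_lt hβ) hl hx

lemma pi_div_four_mul_sq_le_of_isLUB (hu : ∀ x ∈ Ioi a, HasDerivAt u (deriv u x) x)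
    (hu2 : IntegrableOn (fun x => u x ^ 2) (Ioi a))
    (hu'2 : IntegrableOn (fun x => deriv u x ^ 2) (Ioi a))
    {S l : ℝ} (hS : IsLUB ((fun x => u x ^ 2) '' Ioi a) S) (hS0 : 0 < S) (hl : 0 < l) :
    π / 4 * S ^ 2 ≤ l * (∫ y in Ioi a, deriv u y ^ 2)
      + (S ^ 2 * (∫ y in Ioi a, u y ^ 2) - ∫ y in Ioi a, u y ^ 6) / l := by
  have hβ : ∀ β ∈ Ioi S, β ^ 2 / 2 * arcsin (S / β) ≤ l * (∫ y in Ioi a, deriv u y ^ 2)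
      + (β ^ 2 * (∫ y in Ioi a, u y ^ 2) - ∫ y in Ioi a, u y ^ 6) / l := by
    intro β hβ
    have hG := sqrtSubSqAntideriv_le_of_isLUB hu hu2 hu'2 hS hβ hl
    have : 0 ≤ S * √(β ^ 2 - S ^ 2) := by positivity
    unfold sqrtSubSqAntideriv at hG
    linarith
  have := ContinuousWithinAt.closure_le (x := S) (by rw [closure_Ioi]; exact self_mem_Ici)
    (ContinuousAt.continuousWithinAt (by fun_prop (disch := simp [hS0.ne'])))
    (ContinuousAt.continuousWithinAt (by fun_prop (disch := simp [hl.ne']))) hβ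
  rwa [div_self hS0.ne', arcsin_one, show S ^ 2 / 2 * (π / 2) = π / 4 * S ^ 2 by ring] at this

end HalfLine

theorem stmt_18_general (u : ℝ → ℝ)
    (hd : DifferentiableOn ℝ u (Set.Ioi 0))
    (hu2 : IntegrableOn (fun x => (u x) ^ 2) (Set.Ioi 0))
    (hu'2 : IntegrableOn (fun x => (deriv u x) ^ 2) (Set.Ioi 0)) :
    ∫ x in Set.Ioi (0:ℝ), (u x) ^ 6
      ≤ (16 / Real.pi ^ 2) * (∫ x in Set.Ioi (0:ℝ), (u x) ^ 2) ^ 2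
          * ∫ x in Set.Ioi (0:ℝ), (deriv u x) ^ 2 := by
  have hu : ∀ x ∈ Ioi (0:ℝ), HasDerivAt u (deriv u x) x := fun x hx =>
    (hd.differentiableAt (Ioi_mem_nhds hx)).hasDerivAt
  obtain ⟨S, hS⟩ : ∃ S, IsLUB ((fun x => u x ^ 2) '' Ioi (0:ℝ)) S :=
    ⟨_, isLUB_csSup (nonempty_Ioi.image _) (bddAbove_sq_image hu hu2 hu'2)⟩
  set M := ∫ x in Ioi (0:ℝ), u x ^ 2
  set E := ∫ x in Ioi (0:ℝ), deriv u x ^ 2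
  set I := ∫ x in Ioi (0:ℝ), u x ^ 6
  rcases ((sq_nonneg (u 1)).trans (hS.1 ⟨1, mem_Ioi.2 one_pos, rfl⟩)).eq_or_lt with hS0 | hS0
  · have hI : I = 0 := setIntegral_eq_zero_of_forall_eq_zero fun x hx => by
      have hx0 : u x ^ 2 = 0 := le_antisymm (hS0 ▸ hS.1 ⟨x, hx, rfl⟩) (sq_nonneg _)
      rw [show u x ^ 6 = (u x ^ 2) ^ 3 by ring, hx0, zero_pow three_ne_zero]
    rw [hI]
    positivity
  have hmain : (π / 4) ^ 2 * I ≤ M ^ 2 * E :=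
    sq_mul_le_of_forall_le_mul_add_div (by positivity) (integral_nonneg fun x => sq_nonneg _)
      fun l hl => pi_div_four_mul_sq_le_of_isLUB hu hu2 hu'2 hS hS0 hl
  calc I = 16 / π ^ 2 * ((π / 4) ^ 2 * I) := by field_simp; ring
    _ ≤ 16 / π ^ 2 * (M ^ 2 * E) := by gcongr
    _ = _ := by ring

theorem stmt_18 (u : ℝ → ℝ) (hc : ContinuousOn u (Set.Ici 0))
    (hd : DifferentiableOn ℝ u (Set.Ioi 0))
    (hu2 : IntegrableOn (fun x => (u x) ^ 2) (Set.Ioi 0))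
    (hu'2 : IntegrableOn (fun x => (deriv u x) ^ 2) (Set.Ioi 0)) :
    ∫ x in Set.Ioi (0:ℝ), (u x) ^ 6
      ≤ (16 / Real.pi ^ 2) * (∫ x in Set.Ioi (0:ℝ), (u x) ^ 2) ^ 2
          * ∫ x in Set.Ioi (0:ℝ), (deriv u x) ^ 2 :=
  stmt_18_general u hd hu2 hu'2
end

section
/- Asymptotics of the turning point: for s ∈ (0,1), let t(s) be the unique real number t > 0 satisfying t⁶ − t² = 3·s²·(1 − s⁴) (so that t(s) > 1). Then (t(s)⁴ − 1)/s² → 3 as s → 0⁺, i.e. t(s)⁴ − 1 is asymptotic to 3·s² as s → 0⁺. -/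
/-!
Writing the defining equation as `t² (t⁴ - 1) = 3 s² (1 - s⁴)` gives
`(t⁴ - 1) / s² = 3 (1 - s⁴) / t²`, so it suffices that `t² → 1`. This follows by squeezing:
`1 < t²` because the right-hand side is positive, and `t² - 1 ≤ t⁶ - t² ≤ 3 s²` once `t ≥ 1`.
-/

open Real Set Filter Topology

lemma one_lt_of_pow_six_sub_sq_pos {x : ℝ} (hx : 0 < x) (h : 0 < x ^ 6 - x ^ 2) : 1 < x := by
  by_contra! hx1
  have : x ^ 4 ≤ 1 := pow_le_one₀ hx.le hx1
  nlinarith [sq_nonneg x]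

lemma sq_sub_one_le_pow_six_sub_sq {x : ℝ} (hx : 1 ≤ x) : x ^ 2 - 1 ≤ x ^ 6 - x ^ 2 := by
  have : 1 ≤ x ^ 2 := one_le_pow₀ hx
  have : 1 ≤ x ^ 4 + x ^ 2 := by nlinarith
  calc x ^ 2 - 1 ≤ (x ^ 2 - 1) * (x ^ 4 + x ^ 2) := le_mul_of_one_le_right (by linarith) this
    _ = x ^ 6 - x ^ 2 := by ring

lemma sq_le_one_add_of_pow_six_sub_sq_eq {x s : ℝ} (hx : 1 ≤ x)
    (h : x ^ 6 - x ^ 2 = 3 * s ^ 2 * (1 - s ^ 4)) : x ^ 2 ≤ 1 + 3 * s ^ 2 := by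
  have := sq_sub_one_le_pow_six_sub_sq hx
  nlinarith [sq_nonneg (s ^ 3)]

theorem stmt_19 (t : ℝ → ℝ)
    (ht : ∀ s ∈ Set.Ioo (0:ℝ) 1,
      0 < t s ∧ (t s) ^ 6 - (t s) ^ 2 = 3 * s ^ 2 * (1 - s ^ 4)) :
    (∀ s ∈ Set.Ioo (0:ℝ) 1, 1 < t s) ∧
    Filter.Tendsto (fun s => ((t s) ^ 4 - 1) / s ^ 2)
      (nhdsWithin 0 (Set.Ioi 0)) (nhds 3) := by
  have one_lt : ∀ s ∈ Ioo (0:ℝ) 1, 1 < t s := fun s hs =>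
    one_lt_of_pow_six_sub_sq_pos (ht s hs).1 <| by
      have : s ^ 4 < 1 := pow_lt_one₀ hs.1.le hs.2 (by norm_num)
      have : 0 < s ^ 2 := pow_pos hs.1 2
      rw [(ht s hs).2]
      nlinarith
  have near_zero : ∀ᶠ s in 𝓝[>] (0:ℝ), s ∈ Ioo 0 1 := Ioo_mem_nhdsGT one_pos
  have sq_tendsto : Tendsto (fun s => t s ^ 2) (𝓝[>] 0) (𝓝 1) := by
    have upper : Tendsto (fun s : ℝ => 1 + 3 * s ^ 2) (𝓝[>] 0) (𝓝 1) :=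
      tendsto_nhdsWithin_of_tendsto_nhds <| (by fun_prop : Continuous _).tendsto' _ _ (by norm_num)
    refine tendsto_of_tendsto_of_tendsto_of_le_of_le' tendsto_const_nhds upper ?_ ?_
    · filter_upwards [near_zero] with s hs
      exact one_le_pow₀ (one_lt s hs).le
    · filter_upwards [near_zero] with s hs
      exact sq_le_one_add_of_pow_six_sub_sq_eq (one_lt s hs).le (ht s hs).2
  have numerator : Tendsto (fun s : ℝ => 3 * (1 - s ^ 4)) (𝓝[>] 0) (𝓝 3) :=
    tendsto_nhdsWithin_of_tendsto_nhds <| (by fun_prop : Continuous _).tendsto' _ _ (by norm_num)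
  have quotient := numerator.div sq_tendsto one_ne_zero
  rw [div_one] at quotient
  refine ⟨one_lt, quotient.congr' ?_⟩
  filter_upwards [near_zero] with s hs
  rw [Pi.div_apply, div_eq_div_iff (pow_pos (ht s hs).1 2).ne' (pow_pos hs.1 2).ne']
  linear_combination -(ht s hs).2
end
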